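/- Let X = (x₁, ..., xₙ) and X' = (x'₁, ..., x'ₙ) be n-tuples in ℝ⁴ such that for all 4-tuples of index triples (I₁, I₂, I₃, I₄), the signs of det(α(X_{I₁}), α(X_{I₂}), α(X_{I₃}), α(X_{I₄})) and det(α(X'_{I₁}), α(X'_{I₂}), α(X'_{I₃}), α(X'_{I₄})) coincide, where α(u,v,w) is the generalized cross product in ℝ⁴. Then for all indices i, j, k, l, sign(det(x_i, x_j, x_k, x_l)) = sign(det(x'_i, x'_j, x'_k, x'_l)). -/

import Mathlib

open Matrix

noncomputable def det4 (a b c d : Fin 4 → ℝ) : ℝ := Matrix.det (Matrix.of ![a, b, c, d])ᵀ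

/-- The generalized cross product in `ℝ⁴`. -/
noncomputable def alpha4 (u v w : Fin 4 → ℝ) : Fin 4 → ℝ :=
  fun i => det4 u v w (Pi.single i 1)

lemma det_fin_four' (A : Matrix (Fin 4) (Fin 4) ℝ) :
    A.det =
      A 0 0 * (A 1 1 * A 2 2 * A 3 3 - A 1 1 * A 2 3 * A 3 2 - A 1 2 * A 2 1 * A 3 3
        + A 1 2 * A 2 3 * A 3 1 + A 1 3 * A 2 1 * A 3 2 - A 1 3 * A 2 2 * A 3 1)
      - A 0 1 * (A 1 0 * A 2 2 * A 3 3 - A 1 0 * A 2 3 * A 3 2 - A 1 2 * A 2 0 * A 3 3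
        + A 1 2 * A 2 3 * A 3 0 + A 1 3 * A 2 0 * A 3 2 - A 1 3 * A 2 2 * A 3 0)
      + A 0 2 * (A 1 0 * A 2 1 * A 3 3 - A 1 0 * A 2 3 * A 3 1 - A 1 1 * A 2 0 * A 3 3
        + A 1 1 * A 2 3 * A 3 0 + A 1 3 * A 2 0 * A 3 1 - A 1 3 * A 2 1 * A 3 0)
      - A 0 3 * (A 1 0 * A 2 1 * A 3 2 - A 1 0 * A 2 2 * A 3 1 - A 1 1 * A 2 0 * A 3 2
        + A 1 1 * A 2 2 * A 3 0 + A 1 2 * A 2 0 * A 3 1 - A 1 2 * A 2 1 * A 3 0) := by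
  have r0 : Fin.succ (0 : Fin 3) = 1 := rfl
  have r1 : Fin.succ (1 : Fin 3) = 2 := rfl
  have r2 : Fin.succ (2 : Fin 3) = 3 := rfl
  have s00 : (0 : Fin 4).succAbove 0 = 1 := rfl
  have s01 : (0 : Fin 4).succAbove 1 = 2 := rfl
  have s02 : (0 : Fin 4).succAbove 2 = 3 := rfl
  have s10 : (1 : Fin 4).succAbove 0 = 0 := rfl
  have s11 : (1 : Fin 4).succAbove 1 = 2 := rfl
  have s12 : (1 : Fin 4).succAbove 2 = 3 := rfl
  have s20 : (2 : Fin 4).succAbove 0 = 0 := rfl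
  have s21 : (2 : Fin 4).succAbove 1 = 1 := rfl
  have s22 : (2 : Fin 4).succAbove 2 = 3 := rfl
  have s30 : (3 : Fin 4).succAbove 0 = 0 := rfl
  have s31 : (3 : Fin 4).succAbove 1 = 1 := rfl
  have s32 : (3 : Fin 4).succAbove 2 = 2 := rfl
  have v3 : ((3 : Fin 4) : ℕ) = 3 := rfl
  rw [Matrix.det_succ_row_zero, Fin.sum_univ_four]
  simp only [Matrix.det_fin_three, Matrix.submatrix_apply, r0, r1, r2,
    s00, s01, s02, s10, s11, s12, s20, s21, s22, s30, s31, s32, v3]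
  norm_num
  ring


lemma det4_eq (u v w z : Fin 4 → ℝ) :
    det4 u v w z =
      u 0 * (v 1 * w 2 * z 3 - v 1 * w 3 * z 2 - v 2 * w 1 * z 3
        + v 2 * w 3 * z 1 + v 3 * w 1 * z 2 - v 3 * w 2 * z 1)
      - u 1 * (v 0 * w 2 * z 3 - v 0 * w 3 * z 2 - v 2 * w 0 * z 3
        + v 2 * w 3 * z 0 + v 3 * w 0 * z 2 - v 3 * w 2 * z 0)
      + u 2 * (v 0 * w 1 * z 3 - v 0 * w 3 * z 1 - v 1 * w 0 * z 3
        + v 1 * w 3 * z 0 + v 3 * w 0 * z 1 - v 3 * w 1 * z 0)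
      - u 3 * (v 0 * w 1 * z 2 - v 0 * w 2 * z 1 - v 1 * w 0 * z 2
        + v 1 * w 2 * z 0 + v 2 * w 0 * z 1 - v 2 * w 1 * z 0) := by
  rw [det4, Matrix.det_transpose, det_fin_four']
  simp [Matrix.cons_val_zero, Matrix.cons_val_one, Matrix.head_cons]

lemma det4_rows (p q r s : Fin 4 → ℝ) : (Matrix.of ![p, q, r, s]).det = det4 p q r s :=
  (Matrix.det_transpose _).symm

lemma updateRow_cons0 (a b c d x : Fin 4 → ℝ) :
    (Matrix.of ![a, b, c, d]).updateRow 0 x = Matrix.of ![x, b, c, d] := by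
  ext i j
  fin_cases i <;> simp [Matrix.updateRow_apply]

lemma updateRow_cons1 (a b c d x : Fin 4 → ℝ) :
    (Matrix.of ![a, b, c, d]).updateRow 1 x = Matrix.of ![a, x, c, d] := by
  ext i j
  fin_cases i <;> simp [Matrix.updateRow_apply]

lemma updateRow_cons2 (a b c d x : Fin 4 → ℝ) :
    (Matrix.of ![a, b, c, d]).updateRow 2 x = Matrix.of ![a, b, x, d] := by
  ext i j
  fin_cases i <;> simp [Matrix.updateRow_apply]

lemma updateRow_cons3 (a b c d x : Fin 4 → ℝ) :
    (Matrix.of ![a, b, c, d]).updateRow 3 x = Matrix.of ![a, b, c, x] := by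
  ext i j
  fin_cases i <;> simp [Matrix.updateRow_apply]

lemma key (a b c d : Fin 4 → ℝ) :
    det4 (alpha4 b c d) (alpha4 a c d) (alpha4 a b d) (alpha4 a b c)
      = (det4 a b c d)^3 := by
  classical
  set M : Matrix (Fin 4) (Fin 4) ℝ := Matrix.of ![a, b, c, d] with hMdef
  set N : Matrix (Fin 4) (Fin 4) ℝ :=
    Matrix.of ![alpha4 b c d, alpha4 a c d, alpha4 a b d, alpha4 a b c] with hNdef
  have hN : N = Matrix.diagonal ![(-1 : ℝ), 1, -1, 1] * (Matrix.adjugate M)ᵀ := by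
    ext k j
    rw [Matrix.diagonal_mul, Matrix.transpose_apply, Matrix.adjugate_apply]
    fin_cases k
    · show alpha4 b c d j =
        ![(-1:ℝ),1,-1,1] 0 * ((Matrix.of ![a,b,c,d]).updateRow 0 (Pi.single j 1)).det
      rw [updateRow_cons0, det4_rows, alpha4]
      simp only [det4_eq, Matrix.cons_val_zero]; ring
    · show alpha4 a c d j =
        ![(-1:ℝ),1,-1,1] 1 * ((Matrix.of ![a,b,c,d]).updateRow 1 (Pi.single j 1)).det
      rw [updateRow_cons1, det4_rows, alpha4]
      simp only [det4_eq, Matrix.cons_val_one, Matrix.head_cons, Matrix.cons_val_zero]; ring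
    · show alpha4 a b d j =
        ![(-1:ℝ),1,-1,1] 2 * ((Matrix.of ![a,b,c,d]).updateRow 2 (Pi.single j 1)).det
      rw [updateRow_cons2, det4_rows, alpha4]
      have : (![(-1:ℝ),1,-1,1] 2) = -1 := rfl
      rw [this]
      simp only [det4_eq]; ring
    · show alpha4 a b c j =
        ![(-1:ℝ),1,-1,1] 3 * ((Matrix.of ![a,b,c,d]).updateRow 3 (Pi.single j 1)).det
      rw [updateRow_cons3, det4_rows, alpha4]
      have : (![(-1:ℝ),1,-1,1] 3) = 1 := rfl
      rw [this]
      simp only [det4_eq]; ring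
  have hdetN : N.det = (M.det) ^ 3 := by
    rw [hN, Matrix.det_mul, Matrix.det_transpose, Matrix.det_adjugate, Matrix.det_diagonal]
    norm_num [Fin.prod_univ_four]
    rw [show (![(-1:ℝ),1,-1,1] 2) = -1 from rfl, show (![(-1:ℝ),1,-1,1] 3) = 1 from rfl]; ring
  calc det4 (alpha4 b c d) (alpha4 a c d) (alpha4 a b d) (alpha4 a b c)
      = N.det := (det4_rows _ _ _ _).symm
    _ = M.det ^ 3 := hdetN
    _ = (det4 a b c d) ^ 3 := by rw [hMdef, det4_rows]

lemma sign_cube (x : ℝ) : Real.sign (x ^ 3) = Real.sign x := by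
  rcases lt_trichotomy x 0 with h | h | h
  · rw [Real.sign_of_neg h, Real.sign_of_neg (Odd.pow_neg (by decide) h)]
  · simp [h]
  · rw [Real.sign_of_pos h, Real.sign_of_pos (pow_pos h 3)]


theorem wedge_determines_chirotope_dim4 {n : ℕ} (X X' : Fin n → Fin 4 → ℝ)
    (h : ∀ I₁ I₂ I₃ I₄ : Fin n × Fin n × Fin n,
      Real.sign (det4 (alpha4 (X I₁.1) (X I₁.2.1) (X I₁.2.2))
          (alpha4 (X I₂.1) (X I₂.2.1) (X I₂.2.2))
          (alpha4 (X I₃.1) (X I₃.2.1) (X I₃.2.2))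
          (alpha4 (X I₄.1) (X I₄.2.1) (X I₄.2.2)))
        = Real.sign (det4 (alpha4 (X' I₁.1) (X' I₁.2.1) (X' I₁.2.2))
          (alpha4 (X' I₂.1) (X' I₂.2.1) (X' I₂.2.2))
          (alpha4 (X' I₃.1) (X' I₃.2.1) (X' I₃.2.2))
          (alpha4 (X' I₄.1) (X' I₄.2.1) (X' I₄.2.2)))) :
    ∀ i j k l : Fin n,
      Real.sign (det4 (X i) (X j) (X k) (X l))
        = Real.sign (det4 (X' i) (X' j) (X' k) (X' l)) := by
  intro i j k l
  have hh := h (j, k, l) (i, k, l) (i, j, l) (i, j, k)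
  simp only [key] at hh
  rwa [sign_cube, sign_cube] at hh
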